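/- arXiv:2507.15191 — 2 statements merged into one kernel-verified Lean document; each statement's English description precedes it below -/
import Mathlib

section
/- Let Π₀ be an orthogonal projection on a finite-dimensional Hilbert space with Π₀ ∉ {0, I}, and let X be the extension to B(ℍ) of a positive definite operator X_R on the orthogonal complement ℍ_R = (ran Π₀)^⊥ (i.e., X = Π₀^⊥ X_R Π₀^⊥, positive definite on ℍ_R). Then there exist constants c₁, c₂ > 0 such that c₁·Tr(Xρ) ≤ ‖ρ − Π₀ρΠ₀‖ ≤ c₂·√(Tr(Xρ)) for all density matrices ρ. -/
open Matrix ComplexOrder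
open scoped Matrix.Norms.L2Operator

section Helpers
variable {n : Type*} [Fintype n] [DecidableEq n]

lemma aux_diag_nonneg {ρ : Matrix n n ℂ} (h : ρ.PosSemidef) (a : n) : 0 ≤ ρ a a := by
  exact h.diag_nonneg

open scoped MatrixOrder in
lemma aux_psd_eq_conjTranspose_mul_self {P : Matrix n n ℂ} (hP : P.PosSemidef) :
    ∃ B : Matrix n n ℂ, P = Bᴴ * B :=
  CStarAlgebra.nonneg_iff_eq_star_mul_self.mp hP.nonneg

lemma aux_trace_mul_nonneg {P Q : Matrix n n ℂ} (hP : P.PosSemidef) (hQ : Q.PosSemidef) :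
    0 ≤ Matrix.trace (P * Q) := by
  obtain ⟨B, rfl⟩ := aux_psd_eq_conjTranspose_mul_self hP
  obtain ⟨C, rfl⟩ := aux_psd_eq_conjTranspose_mul_self hQ
  have : Matrix.trace (Bᴴ * B * (Cᴴ * C)) = Matrix.trace ((C * Bᴴ)ᴴ * (C * Bᴴ)) := by
    rw [conjTranspose_mul, conjTranspose_conjTranspose]
    rw [show Bᴴ * B * (Cᴴ * C) = Bᴴ * (B * Cᴴ * C) by simp [mul_assoc],
      trace_mul_comm, show B * Cᴴ * C * Bᴴ = B * Cᴴ * (C * Bᴴ) by simp [mul_assoc]]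
  rw [this, Matrix.trace]
  apply Finset.sum_nonneg
  intro i _
  rw [Matrix.diag_apply, Matrix.mul_apply]
  apply Finset.sum_nonneg
  intro j _
  simpa [conjTranspose_apply] using star_mul_self_nonneg ((C * Bᴴ) j i)

lemma aux_entry_sq_le {ρ : Matrix n n ℂ} (h : ρ.PosSemidef) (a b : n) :
    ‖ρ a b‖ ^ 2 ≤ (ρ a a).re * (ρ b b).re := by
  obtain ⟨B, rfl⟩ := aux_psd_eq_conjTranspose_mul_self h
  let u : EuclideanSpace ℂ n := WithLp.toLp 2 (fun k => B k a)
  let v : EuclideanSpace ℂ n := WithLp.toLp 2 (fun k => B k b)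
  have hinner : inner ℂ u v = (Bᴴ * B) a b := by
    simp [u, v, PiLp.inner_apply, Matrix.mul_apply, conjTranspose_apply, mul_comm]
  have huu : inner ℂ u u = (Bᴴ * B) a a := by
    rw [PiLp.inner_apply]; simp [u, Matrix.mul_apply, conjTranspose_apply, mul_comm, Complex.mul_conj']
  have hvv : inner ℂ v v = (Bᴴ * B) b b := by
    rw [PiLp.inner_apply]; simp [v, Matrix.mul_apply, conjTranspose_apply, mul_comm, Complex.mul_conj']
  have hu : ((Bᴴ * B) a a).re = ‖u‖ ^ 2 := by
    rw [← huu]; exact RCLike.re_to_complex ▸ (@inner_self_eq_norm_sq ℂ _ _ _ _ u)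
  have hv : ((Bᴴ * B) b b).re = ‖v‖ ^ 2 := by
    rw [← hvv]; exact RCLike.re_to_complex ▸ (@inner_self_eq_norm_sq ℂ _ _ _ _ v)
  have hcs := norm_inner_le_norm (𝕜 := ℂ) u v
  rw [← hinner, hu, hv]
  calc ‖(inner ℂ u v : ℂ)‖ ^ 2 ≤ (‖u‖ * ‖v‖) ^ 2 := by
        apply pow_le_pow_left₀ (norm_nonneg _) hcs
    _ = ‖u‖ ^ 2 * ‖v‖ ^ 2 := by ring

lemma aux_opnorm_le : ∃ K > (0:ℝ), ∀ (M : Matrix n n ℂ) (c : ℝ), 0 ≤ c →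
    (∀ a b, ‖M a b‖ ≤ c) → ‖M‖ ≤ K * c := by
  let L : (n → n → ℂ) →ₗ[ℂ] Matrix n n ℂ :=
    { toFun := Matrix.of, map_add' := fun _ _ => rfl, map_smul' := fun _ _ => rfl }
  let L' := LinearMap.toContinuousLinearMap L
  refine ⟨‖L'‖ + 1, by positivity, fun M c hc hM => ?_⟩
  have h1 : ‖M‖ = ‖L' (fun a b => M a b)‖ := rfl
  have h2 : ‖(fun a b => M a b : n → n → ℂ)‖ ≤ c := by
    rw [pi_norm_le_iff_of_nonneg hc]
    intro a
    rw [pi_norm_le_iff_of_nonneg hc]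
    intro b
    simpa using hM a b
  calc ‖M‖ ≤ ‖L'‖ * ‖(fun a b => M a b : n → n → ℂ)‖ := h1 ▸ L'.le_opNorm _
    _ ≤ (‖L'‖ + 1) * c := by
        apply mul_le_mul (by linarith) h2 (norm_nonneg _) (by positivity)

lemma aux_trace_bound (X : Matrix n n ℂ) : ∃ K > (0:ℝ), ∀ M : Matrix n n ℂ,
    |(Matrix.trace (X * M)).re| ≤ K * ‖M‖ := by
  let f : Matrix n n ℂ →ₗ[ℂ] ℂ :=
    { toFun := fun M => Matrix.trace (X * M),
      map_add' := fun A B => by simp [mul_add],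
      map_smul' := fun c A => by simp [mul_smul_comm] }
  let f' := LinearMap.toContinuousLinearMap f
  refine ⟨‖f'‖ + 1, by positivity, fun M => ?_⟩
  calc |(Matrix.trace (X * M)).re| ≤ ‖Matrix.trace (X * M)‖ := Complex.abs_re_le_norm _
    _ = ‖f' M‖ := rfl
    _ ≤ ‖f'‖ * ‖M‖ := f'.le_opNorm _
    _ ≤ (‖f'‖ + 1) * ‖M‖ := by apply mul_le_mul_of_nonneg_right (by linarith) (norm_nonneg _)

lemma aux_eps {r : ℕ} [NeZero r] (XR : Matrix (Fin r) (Fin r) ℂ) (hXR : XR.PosDef) :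
    ∃ ε > (0:ℝ), ∀ C : Matrix (Fin r) (Fin r) ℂ, C.PosSemidef →
      ε * (Matrix.trace C).re ≤ (Matrix.trace (XR * C)).re := by
  have hne : (Finset.univ : Finset (Fin r)).Nonempty := Finset.univ_nonempty
  set ε := Finset.univ.inf' hne hXR.1.eigenvalues with hε
  have hεpos : 0 < ε := by
    rw [hε, Finset.lt_inf'_iff]
    intro i _
    exact hXR.eigenvalues_pos i
  have hPSD : (XR - (ε : ℂ) • 1).PosSemidef := by
    set U := (hXR.1.eigenvectorUnitary : Matrix (Fin r) (Fin r) ℂ) with hU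
    have h1 : U * star U = 1 := Matrix.mem_unitaryGroup_iff.mp hXR.1.eigenvectorUnitary.2
    have key : XR - (ε : ℂ) • 1 =
        U * Matrix.diagonal (fun i => ((hXR.1.eigenvalues i : ℂ) - ε)) * Uᴴ := by
      have hs := hXR.1.spectral_theorem
      simp only [Unitary.conjStarAlgAut_apply, Unitary.coe_star] at hs
      have hd : Matrix.diagonal (fun i => ((hXR.1.eigenvalues i : ℂ) - ε)) =
          Matrix.diagonal (RCLike.ofReal ∘ hXR.1.eigenvalues) - (ε : ℂ) • 1 := by
        ext i j
        by_cases h : i = j <;>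
          simp [Matrix.diagonal_apply, Matrix.one_apply, h, Matrix.smul_apply]
      rw [hd, Matrix.mul_sub, Matrix.sub_mul, ← Matrix.star_eq_conjTranspose, ← hs]
      congr 1
      rw [Matrix.mul_smul, Matrix.smul_mul, mul_one, h1]
    rw [key]
    refine Matrix.PosSemidef.mul_mul_conjTranspose_same ?_ U
    rw [Matrix.posSemidef_diagonal_iff]
    intro i
    rw [show ((hXR.1.eigenvalues i : ℂ) - ε) = ((hXR.1.eigenvalues i - ε : ℝ) : ℂ) by push_cast; ring]
    rw [Complex.zero_le_real]
    have := Finset.inf'_le hXR.1.eigenvalues (Finset.mem_univ i)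
    linarith [this]
  refine ⟨ε, hεpos, fun C hC => ?_⟩
  have h0 := aux_trace_mul_nonneg hPSD hC
  have : Matrix.trace ((XR - (ε : ℂ) • 1) * C) =
      Matrix.trace (XR * C) - (ε : ℂ) * Matrix.trace C := by
    rw [Matrix.sub_mul, trace_sub, Matrix.smul_mul, one_mul, trace_smul]
    simp
  rw [this] at h0
  have h0re := (Complex.nonneg_iff.mp h0).1
  simp only [Complex.sub_re, Complex.mul_re, Complex.ofReal_re, Complex.ofReal_im] at h0re
  linarith

end Helpers

/-- Lemma 2 of the paper: if `X` is the extension to the full space of a positive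
definite `X_R` on `ℍ_R`, then there are constants `c₁, c₂ > 0` such that
`c₁·Tr(Xρ) ≤ ‖ρ − P₀ρP₀‖ ≤ c₂·√(Tr(Xρ))` for every density matrix `ρ`, where
`P₀` is the orthogonal projection onto `ℍ_S`. -/
theorem dist_trace_lyapunov_bounds
    {s r : ℕ} [NeZero s] [NeZero r]
    (XR : Matrix (Fin r) (Fin r) ℂ) (hXR : XR.PosDef)
    (X : Matrix (Fin s ⊕ Fin r) (Fin s ⊕ Fin r) ℂ)
    (hX : X = Matrix.fromBlocks 0 0 0 XR)
    (P₀ : Matrix (Fin s ⊕ Fin r) (Fin s ⊕ Fin r) ℂ)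
    (hP₀ : P₀ = Matrix.fromBlocks 1 0 0 0) :
    ∃ c₁ > (0 : ℝ), ∃ c₂ > (0 : ℝ),
      ∀ ρ : Matrix (Fin s ⊕ Fin r) (Fin s ⊕ Fin r) ℂ,
        ρ.PosSemidef → Matrix.trace ρ = 1 →
          c₁ * (Matrix.trace (X * ρ)).re ≤ ‖ρ - P₀ * ρ * P₀‖ ∧
          ‖ρ - P₀ * ρ * P₀‖ ≤ c₂ * Real.sqrt ((Matrix.trace (X * ρ)).re) := by

  obtain ⟨K₂, hK₂, hop⟩ := aux_opnorm_le (n := Fin s ⊕ Fin r)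
  obtain ⟨K₃, hK₃, htr⟩ := aux_trace_bound X
  obtain ⟨ε, hεpos, heps⟩ := aux_eps XR hXR
  refine ⟨1 / K₃, by positivity, K₂ / Real.sqrt ε, by positivity, fun ρ hρ hρtr => ?_⟩
  set M := ρ - P₀ * ρ * P₀ with hMdef
  set t := (Matrix.trace (X * ρ)).re with htdef
  -- block structure
  have hρb := (fromBlocks_toBlocks ρ).symm
  have hP₀ρ : P₀ * ρ * P₀ =
      Matrix.fromBlocks ρ.toBlocks₁₁ 0 0 0 := by
    rw [hP₀]
    conv_lhs => rw [hρb]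
    rw [fromBlocks_multiply, fromBlocks_multiply]
    simp
  -- trace (X * ρ) = trace (XR * C)
  set C := ρ.toBlocks₂₂ with hCdef
  have hC : C.PosSemidef := hρ.submatrix Sum.inr
  have hXρ : X * ρ = Matrix.fromBlocks 0 0 (XR * ρ.toBlocks₂₁) (XR * C) := by
    rw [hX]
    conv_lhs => rw [hρb]
    rw [fromBlocks_multiply]
    simp
  have htXρ : Matrix.trace (X * ρ) = Matrix.trace (XR * C) := by
    rw [hXρ, Matrix.trace, Matrix.trace, Fintype.sum_sum_type]
    simp
  -- lower bound
  have hXP₀ : X * P₀ = 0 := by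
    rw [hX, hP₀, fromBlocks_multiply]
    simp
  have htrM : Matrix.trace (X * M) = Matrix.trace (X * ρ) := by
    rw [hMdef, mul_sub, show X * (P₀ * ρ * P₀) = X * P₀ * ρ * P₀ by simp [mul_assoc],
      hXP₀]
    simp
  have hlow : 1 / K₃ * t ≤ ‖M‖ := by
    have h1 : t ≤ K₃ * ‖M‖ := by
      have := htr M
      rw [htrM] at this
      exact le_trans (le_abs_self _) this
    rw [one_div, inv_mul_le_iff₀ hK₃]
    exact h1
  refine ⟨hlow, ?_⟩
  -- upper bound
  set τ := (Matrix.trace C).re with hτdef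
  have hτt : ε * τ ≤ t := by
    rw [htdef, htXρ]
    exact heps C hC
  -- diagonal entries facts
  have hρdiag : ∀ a, 0 ≤ (ρ a a).re := fun a => (Complex.nonneg_iff.mp (aux_diag_nonneg hρ a)).1
  have hsum : ∑ a, (ρ a a).re = 1 := by
    have : (Matrix.trace ρ).re = 1 := by rw [hρtr]; simp
    rw [← this, Matrix.trace, Complex.re_sum]
    rfl
  have hρdiag1 : ∀ a, (ρ a a).re ≤ 1 := by
    intro a
    rw [← hsum]
    exact Finset.single_le_sum (fun i _ => hρdiag i) (Finset.mem_univ a)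
  have hτeq : τ = ∑ k, (ρ (Sum.inr k) (Sum.inr k)).re := by
    rw [hτdef, Matrix.trace, Complex.re_sum]
    rfl
  have hτ0 : 0 ≤ τ := by
    rw [hτeq]
    exact Finset.sum_nonneg fun k _ => hρdiag _
  have hCdiag : ∀ k, (ρ (Sum.inr k) (Sum.inr k)).re ≤ τ := by
    intro k
    rw [hτeq]
    exact Finset.single_le_sum (fun i _ => hρdiag _) (Finset.mem_univ k)
  have hτ1 : τ ≤ 1 := by
    rw [hτeq, ← hsum, Fintype.sum_sum_type]
    have : 0 ≤ ∑ i : Fin s, (ρ (Sum.inl i) (Sum.inl i)).re :=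
      Finset.sum_nonneg fun i _ => hρdiag _
    linarith
  -- entrywise bound
  have hent : ∀ a b, ‖M a b‖ ≤ Real.sqrt τ := by
    intro a b
    have hMab : M a b = ρ a b - (Matrix.fromBlocks ρ.toBlocks₁₁ 0 0 0 : Matrix _ _ ℂ) a b := by
      rw [hMdef, hP₀ρ]; rfl
    rcases a with i | i <;> rcases b with j | j
    · have : M (Sum.inl i) (Sum.inl j) = 0 := by
        rw [hMab]
        simp [Matrix.fromBlocks_apply₁₁, Matrix.toBlocks₁₁]
      rw [this]
      simpa using Real.sqrt_nonneg τ
    · have hMab' : M (Sum.inl i) (Sum.inr j) = ρ (Sum.inl i) (Sum.inr j) := by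
        rw [hMab]; simp
      rw [hMab']
      apply Real.le_sqrt_of_sq_le
      have hsq := aux_entry_sq_le hρ (Sum.inl i) (Sum.inr j)
      nlinarith [hρdiag (Sum.inl i), hρdiag (Sum.inr j), hρdiag1 (Sum.inl i), hCdiag j, hτ0]
    · have hMab' : M (Sum.inr i) (Sum.inl j) = ρ (Sum.inr i) (Sum.inl j) := by
        rw [hMab]; simp
      rw [hMab']
      apply Real.le_sqrt_of_sq_le
      have hsq := aux_entry_sq_le hρ (Sum.inr i) (Sum.inl j)
      nlinarith [hρdiag (Sum.inr i), hρdiag (Sum.inl j), hρdiag1 (Sum.inl j), hCdiag i, hτ0]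
    · have hMab' : M (Sum.inr i) (Sum.inr j) = ρ (Sum.inr i) (Sum.inr j) := by
        rw [hMab]; simp
      rw [hMab']
      apply Real.le_sqrt_of_sq_le
      have hsq := aux_entry_sq_le hρ (Sum.inr i) (Sum.inr j)
      nlinarith [hρdiag (Sum.inr i), hρdiag (Sum.inr j), hCdiag i, hCdiag j, hτ0, hτ1]
  have hnorm : ‖M‖ ≤ K₂ * Real.sqrt τ := hop M _ (Real.sqrt_nonneg τ) hent
  have ht0 : 0 ≤ t := le_trans (by positivity) hτt
  have hsq2 : Real.sqrt τ ≤ Real.sqrt t / Real.sqrt ε := by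
    rw [← Real.sqrt_div' t hεpos.le]
    apply Real.sqrt_le_sqrt
    rw [le_div_iff₀ hεpos]
    linarith
  calc ‖M‖ ≤ K₂ * Real.sqrt τ := hnorm
    _ ≤ K₂ * (Real.sqrt t / Real.sqrt ε) := by
        exact mul_le_mul_of_nonneg_left hsq2 hK₂.le
    _ = K₂ / Real.sqrt ε * Real.sqrt t := by ring
end

section
/- Let C be a complex d×d matrix with lower-left block C_Q = 0 with respect to ℍ = ℍ_S ⊕ ℍ_R, and suppose the Hermitian matrix C_S + C_S* is positive definite. Then for every sequence of density matrices ρ_n converging to the set I(ℍ_S) = {ρ : Tr(Π₀ρ_n) = 1}, we have liminf_n |Tr((C + C*)ρ_n)| ≥ λ_min(C_S + C_S*) > 0. -/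
open Matrix ComplexOrder

lemma diag_nonneg' {n : Type*} [Fintype n] [DecidableEq n] {M : Matrix n n ℂ}
    (hM : M.PosSemidef) (i : n) : 0 ≤ M i i := by
  have := hM.dotProduct_mulVec_nonneg (Pi.single i 1)
  simpa [dotProduct, Matrix.mulVec, Pi.single_apply, Finset.sum_ite_eq,
    Finset.sum_ite_eq'] using this

lemma abs_of_nonneg' {z : ℂ} (hz : 0 ≤ z) : norm z = z.re := by
  obtain ⟨hre, him⟩ := Complex.le_def.mp hz
  simp only [Complex.zero_re, Complex.zero_im] at hre him
  rw [Complex.norm_def, Complex.normSq_apply, ← him, mul_zero, add_zero,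
    Real.sqrt_mul_self hre]

lemma trace_nonneg' {n : Type*} [Fintype n] [DecidableEq n] {M : Matrix n n ℂ}
    (hM : M.PosSemidef) : 0 ≤ M.trace :=
  Finset.sum_nonneg fun i _ => diag_nonneg' hM i

open scoped MatrixOrder in
set_option maxHeartbeats 1000000 in
lemma trace_mul_psd_nonneg {n : Type*} [Fintype n] [DecidableEq n] {P A : Matrix n n ℂ}
    (hP : P.PosSemidef) (hA : A.PosSemidef) : 0 ≤ (P * A).trace := by
  have hS := (CFC.sqrt_nonneg A).posSemidef
  have h1 : P * A = P * CFC.sqrt A * CFC.sqrt A := by rw [Matrix.mul_assoc, CFC.sqrt_mul_sqrt_self A hA.nonneg]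
  have h2 : ((P * CFC.sqrt A) * CFC.sqrt A).trace = (CFC.sqrt A * P * CFC.sqrt A).trace := by
    rw [Matrix.trace_mul_comm, Matrix.mul_assoc]
  have h3 : (CFC.sqrt A * P * (CFC.sqrt A)ᴴ).PosSemidef := hP.mul_mul_conjTranspose_same _
  rw [hS.isHermitian] at h3
  rw [h1, h2]
  exact trace_nonneg' h3

set_option maxHeartbeats 1000000 in
lemma iInf_smul_trace_le {n : Type*} [Fintype n] [DecidableEq n] [Nonempty n]
    {M A : Matrix n n ℂ} (hM : M.IsHermitian) (hA : A.PosSemidef) :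
    ((⨅ i, hM.eigenvalues i : ℝ) : ℂ) * A.trace ≤ (M * A).trace := by
  set μ : ℝ := ⨅ i, hM.eigenvalues i with hμ
  set U : Matrix n n ℂ := (hM.eigenvectorUnitary : Matrix n n ℂ) with hU
  have hUU : U * star U = 1 := Matrix.mem_unitaryGroup_iff.mp hM.eigenvectorUnitary.2
  have hdiag : (Matrix.diagonal (fun i => ((hM.eigenvalues i - μ : ℝ) : ℂ))).PosSemidef := by
    refine Matrix.posSemidef_diagonal_iff.mpr fun i => ?_
    rw [Complex.zero_le_real]
    have : μ ≤ hM.eigenvalues i := ciInf_le (Set.finite_range _).bddBelow i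
    linarith
  have hMsub : M - (μ : ℂ) • 1 =
      U * Matrix.diagonal (fun i => ((hM.eigenvalues i - μ : ℝ) : ℂ)) * star U := by
    have hd : Matrix.diagonal (fun i => ((hM.eigenvalues i - μ : ℝ) : ℂ))
        = Matrix.diagonal (RCLike.ofReal ∘ hM.eigenvalues) - (μ : ℂ) • 1 := by
      ext i j
      by_cases h : i = j <;>
        simp [h, Matrix.diagonal_apply, Matrix.one_apply, Matrix.sub_apply, Complex.ofReal_sub]
    rw [hd, Matrix.mul_sub, Matrix.sub_mul, Matrix.mul_smul, Matrix.smul_mul, Matrix.mul_one, hUU]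
    congr 1
    have hst := hM.spectral_theorem
    rwa [Unitary.conjStarAlgAut_apply] at hst
  have hpsd : (M - (μ : ℂ) • 1).PosSemidef := by
    rw [hMsub, Matrix.star_eq_conjTranspose]
    exact hdiag.mul_mul_conjTranspose_same U
  have h0 : 0 ≤ ((M - (μ : ℂ) • 1) * A).trace := trace_mul_psd_nonneg hpsd hA
  have hexp : ((M - (μ : ℂ) • 1) * A).trace = (M * A).trace - (μ : ℂ) * A.trace := by
    rw [Matrix.sub_mul, Matrix.trace_sub, Matrix.smul_mul, Matrix.one_mul, Matrix.trace_smul]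
    simp [smul_eq_mul]
  rw [hexp] at h0
  exact sub_nonneg.mp h0

set_option maxHeartbeats 1000000 in
lemma abs_sq_entry_le {n : Type*} [Fintype n] [DecidableEq n] {M : Matrix n n ℂ}
    (hM : M.PosSemidef) (i j : n) :
    norm (M i j) ^ 2 ≤ (M i i).re * (M j j).re := by
  by_cases hij : i = j
  · subst hij
    rw [abs_of_nonneg' (diag_nonneg' hM i)]
    ring_nf
    exact le_refl _
  have hii : 0 ≤ (M i i).re := by
    have := Complex.le_def.mp (diag_nonneg' hM i); simpa using this.1
  have hjj : 0 ≤ (M j j).re := by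
    have := Complex.le_def.mp (diag_nonneg' hM j); simpa using this.1
  by_cases h0 : M i j = 0
  · simpa [h0] using mul_nonneg hii hjj
  have habs : (0:ℝ) < norm (M i j) := norm_pos_iff.mpr h0
  have habs' : (norm (M i j) : ℂ) ≠ 0 := by exact_mod_cast habs.ne'
  obtain ⟨c, hconj, hcc⟩ : ∃ c : ℂ, (starRingEnd ℂ) c * M i j = -(norm (M i j) : ℂ) ∧
      (starRingEnd ℂ) c * c = 1 := by
    refine ⟨-(M i j) / (norm (M i j) : ℂ), ?_, ?_⟩
    · rw [map_div₀, map_neg, Complex.conj_ofReal]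
      field_simp
      rw [mul_comm ((starRingEnd ℂ) (M i j)) (M i j), Complex.mul_conj, ← Complex.sq_norm]
      push_cast; ring
    · rw [map_div₀, map_neg, Complex.conj_ofReal]
      field_simp
      rw [mul_comm ((starRingEnd ℂ) (M i j)) (M i j), Complex.mul_conj, ← Complex.sq_norm]
      push_cast; ring
  have hMji : M j i = (starRingEnd ℂ) (M i j) := by
    have h := hM.isHermitian.apply i j
    have h2 : M j i = star (M i j) := by rw [← h, star_star]
    simpa [Complex.star_def] using h2
  have key : ∀ x : ℝ, 0 ≤ (M i i).re * (x * x) + (-(2 * norm (M i j))) * x + (M j j).re := by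
    intro x
    obtain ⟨a, ha⟩ : ∃ a : ℂ, a = (x : ℂ) * c := ⟨_, rfl⟩
    have h := hM.dotProduct_mulVec_nonneg (Pi.single i a + Pi.single j 1)
    have hq : star (Pi.single i a + Pi.single j 1) ⬝ᵥ
        (M *ᵥ (Pi.single i a + Pi.single j 1)) =
        (starRingEnd ℂ) a * a * M i i + (starRingEnd ℂ) a * M i j + M j i * a + M j j := by
      rw [Matrix.mulVec_add, Matrix.mulVec_single, Matrix.mulVec_single, star_add,
        ← Pi.single_star, ← Pi.single_star, star_one, add_dotProduct,
        single_dotProduct, single_dotProduct]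
      simp only [Pi.add_apply, mul_one, Pi.single_apply, hij, Ne.symm hij, if_neg, if_pos,
        ite_true, ite_false, Pi.smul_apply, op_smul_eq_mul, Matrix.col_apply]
      have : star a = (starRingEnd ℂ) a := rfl
      rw [this]; ring
    rw [hq] at h
    have hre := (Complex.le_def.mp h).1
    have hca : (starRingEnd ℂ) a * a = ((x * x : ℝ) : ℂ) := by
      rw [ha, _root_.map_mul, Complex.conj_ofReal]; push_cast
      calc (x:ℂ) * (starRingEnd ℂ) c * ((x:ℂ) * c) = (x:ℂ)*(x:ℂ)*((starRingEnd ℂ) c * c) := by ring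
      _ = (x:ℂ)*(x:ℂ) := by rw [hcc, mul_one]
    have hcaM : (starRingEnd ℂ) a * M i j = -((x * norm (M i j) : ℝ) : ℂ) := by
      rw [ha, _root_.map_mul, Complex.conj_ofReal, mul_assoc, hconj]; push_cast; ring
    have h2 : M j i * c = -(norm (M i j) : ℂ) := by
      rw [hMji, ← Complex.conj_conj c, ← _root_.map_mul,
        mul_comm (M i j) ((starRingEnd ℂ) c), hconj, map_neg, Complex.conj_ofReal]
    have hMa : M j i * a = -((x * norm (M i j) : ℝ) : ℂ) := by
      rw [ha, mul_left_comm, h2]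
      push_cast; ring
    rw [hca, hcaM, hMa] at hre
    simp only [Complex.add_re, Complex.mul_re, Complex.ofReal_re, Complex.ofReal_im,
      Complex.neg_re, Complex.zero_re] at hre ⊢
    nlinarith [hre]
  have hd := discrim_le_zero key
  rw [discrim] at hd
  nlinarith [habs]



lemma trace_fromBlocks' {m n : Type*} [Fintype m] [Fintype n]
    (A : Matrix m m ℂ) (B : Matrix m n ℂ) (C : Matrix n m ℂ) (D : Matrix n n ℂ) :
    (Matrix.fromBlocks A B C D).trace = A.trace + D.trace := by
  simp [Matrix.trace, Fintype.sum_sum_type, Matrix.fromBlocks, Matrix.diag]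

lemma trace_mul_expand {m k : Type*} [Fintype m] [Fintype k]
    (N : Matrix m k ℂ) (E : Matrix k m ℂ) :
    (N * E).trace = ∑ i, ∑ j, N i j * E j i := by
  simp [Matrix.trace, Matrix.mul_apply, Matrix.diag]

lemma trace_abs_bound {m k : Type*} [Fintype m] [Fintype k]
    (N : Matrix m k ℂ) (E : Matrix k m ℂ) (b : ℝ)
    (hb : ∀ (i : m) (j : k), norm (E j i) ≤ b) :
    |((N * E).trace).re| ≤ (∑ i, ∑ j, norm (N i j)) * b := by
  calc |((N * E).trace).re| ≤ norm ((N * E).trace) := Complex.abs_re_le_norm _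
    _ = norm (∑ i, ∑ j, N i j * E j i) := by rw [trace_mul_expand]
    _ ≤ ∑ i, ∑ j, norm (N i j * E j i) :=
        (norm_sum_le _ _).trans (Finset.sum_le_sum fun i _ => norm_sum_le _ _)
    _ ≤ ∑ i, ∑ j, norm (N i j) * b := by
        refine Finset.sum_le_sum fun i _ => Finset.sum_le_sum fun j _ => ?_
        rw [norm_mul]
        exact mul_le_mul_of_nonneg_left (hb i j) (norm_nonneg _)
    _ = (∑ i, ∑ j, norm (N i j)) * b := by rw [Finset.sum_mul]; simp [Finset.sum_mul]


set_option maxHeartbeats 1000000 in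
lemma aux_bound {s r : ℕ} [NeZero s]
    (CS : Matrix (Fin s) (Fin s) ℂ) (CP : Matrix (Fin s) (Fin r) ℂ)
    (CR : Matrix (Fin r) (Fin r) ℂ) (hCSpd : (CS + CSᴴ).PosDef)
    (M : Matrix (Fin s ⊕ Fin r) (Fin s ⊕ Fin r) ℂ)
    (hM : M.PosSemidef) (htr : M.trace = 1) :
    (⨅ i, hCSpd.1.eigenvalues i) * (1 - (M.toBlocks₂₂.trace).re)
      - 2 * (∑ i, ∑ j, norm (CP i j)) * Real.sqrt ((M.toBlocks₂₂.trace).re)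
      - (∑ i, ∑ j, norm ((CR + CRᴴ) i j)) * (M.toBlocks₂₂.trace).re
    ≤ ((Matrix.fromBlocks (CS + CSᴴ) CP CPᴴ (CR + CRᴴ) * M).trace).re := by
  haveI : Nonempty (Fin s) := ⟨⟨0, Nat.pos_of_ne_zero (NeZero.ne s)⟩⟩
  set t : ℝ := (M.toBlocks₂₂.trace).re with htdef
  set lam : ℝ := ⨅ i, hCSpd.1.eigenvalues i with hlam
  have hApsd : (M.toBlocks₁₁).PosSemidef := hM.submatrix Sum.inl
  have hDpsd : (M.toBlocks₂₂).PosSemidef := hM.submatrix Sum.inr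
  have ht0 : 0 ≤ t := by
    have := Complex.le_def.mp (trace_nonneg' hDpsd)
    simpa using this.1
  -- diagonal entries
  have hdiag : ∀ x, 0 ≤ (M x x).re := fun x => by
    have := Complex.le_def.mp (diag_nonneg' hM x); simpa using this.1
  have htrre : (∑ x, (M x x).re) = 1 := by
    have : (M.trace).re = 1 := by rw [htr]; simp
    rw [Matrix.trace, Complex.re_sum] at this
    simpa [Matrix.diag] using this
  have hdiag1 : ∀ x, (M x x).re ≤ 1 := by
    intro x
    rw [← htrre]
    exact Finset.single_le_sum (fun y _ => hdiag y) (Finset.mem_univ x)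
  have htsum : t = ∑ j : Fin r, (M (Sum.inr j) (Sum.inr j)).re := by
    rw [htdef, Matrix.trace, Complex.re_sum]; rfl
  have hdiagD : ∀ j : Fin r, (M (Sum.inr j) (Sum.inr j)).re ≤ t := by
    intro j
    rw [htsum]
    exact Finset.single_le_sum (fun y _ => hdiag _) (Finset.mem_univ j)
  -- entry bounds
  have hBbound : ∀ (i : Fin s) (j : Fin r),
      norm (M (Sum.inl i) (Sum.inr j)) ≤ Real.sqrt t := by
    intro i j
    rw [Real.le_sqrt (norm_nonneg _) ht0]
    have h := abs_sq_entry_le hM (Sum.inl i) (Sum.inr j)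
    nlinarith [hdiag (Sum.inl i), hdiag (Sum.inr j), hdiag1 (Sum.inl i), hdiagD j]
  have hB'bound : ∀ (j : Fin r) (i : Fin s),
      norm (M (Sum.inr j) (Sum.inl i)) ≤ Real.sqrt t := by
    intro j i
    rw [Real.le_sqrt (norm_nonneg _) ht0]
    have h := abs_sq_entry_le hM (Sum.inr j) (Sum.inl i)
    nlinarith [hdiag (Sum.inl i), hdiag (Sum.inr j), hdiag1 (Sum.inl i), hdiagD j]
  have hDbound : ∀ (i j : Fin r),
      norm (M (Sum.inr i) (Sum.inr j)) ≤ t := by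
    intro i j
    by_cases hij : i = j
    · subst hij
      rw [abs_of_nonneg' (diag_nonneg' hM _)]
      exact hdiagD i
    · have h := abs_sq_entry_le hM (Sum.inr i) (Sum.inr j)
      nlinarith [norm_nonneg (M (Sum.inr i) (Sum.inr j)), hdiag (Sum.inr i),
        hdiag (Sum.inr j), hdiagD i, hdiagD j]
  -- trace decomposition
  have hdecomp : (Matrix.fromBlocks (CS + CSᴴ) CP CPᴴ (CR + CRᴴ) * M).trace
      = ((CS + CSᴴ) * M.toBlocks₁₁).trace + (CP * M.toBlocks₂₁).trace
        + ((CPᴴ * M.toBlocks₁₂).trace + ((CR + CRᴴ) * M.toBlocks₂₂).trace) := by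
    conv_lhs => rw [← Matrix.fromBlocks_toBlocks M]
    rw [Matrix.fromBlocks_multiply, trace_fromBlocks', Matrix.trace_add, Matrix.trace_add]
  -- piece bounds
  have htrA : (M.toBlocks₁₁.trace).re = 1 - t := by
    have hsplit : M.trace = M.toBlocks₁₁.trace + M.toBlocks₂₂.trace := by
      conv_lhs => rw [← Matrix.fromBlocks_toBlocks M]
      rw [trace_fromBlocks']
    have : (M.trace).re = (M.toBlocks₁₁.trace).re + t := by
      rw [hsplit]; simp [htdef]
    rw [htr] at this
    simp at this
    linarith
  have hT1 : lam * (1 - t) ≤ (((CS + CSᴴ) * M.toBlocks₁₁).trace).re := by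
    have h := Complex.le_def.mp (iInf_smul_trace_le hCSpd.1 hApsd)
    have hre := h.1
    rw [Complex.mul_re, Complex.ofReal_re, Complex.ofReal_im] at hre
    rw [htrA] at hre
    simpa [hlam] using hre
  have hT2 : |((CP * M.toBlocks₂₁).trace).re|
      ≤ (∑ i, ∑ j, norm (CP i j)) * Real.sqrt t := by
    exact trace_abs_bound CP M.toBlocks₂₁ (Real.sqrt t) fun i j => hB'bound j i
  have hT3 : |((CPᴴ * M.toBlocks₁₂).trace).re|
      ≤ (∑ i, ∑ j, norm (CP i j)) * Real.sqrt t := by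
    have h := trace_abs_bound CPᴴ M.toBlocks₁₂ (Real.sqrt t) fun j i => hBbound i j
    have hsum : (∑ j : Fin r, ∑ i : Fin s, norm (CPᴴ j i))
        = ∑ i, ∑ j, norm (CP i j) := by
      rw [Finset.sum_comm]
      simp [Matrix.conjTranspose_apply, Complex.norm_conj]
    rwa [hsum] at h
  have hT4 : |(((CR + CRᴴ) * M.toBlocks₂₂).trace).re|
      ≤ (∑ i, ∑ j, norm ((CR + CRᴴ) i j)) * t := by
    exact trace_abs_bound _ M.toBlocks₂₂ t fun i j => hDbound j i
  rw [hdecomp]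
  simp only [Complex.add_re]
  have e2 := neg_abs_le (((CP * M.toBlocks₂₁).trace).re)
  have e3 := neg_abs_le (((CPᴴ * M.toBlocks₁₂).trace).re)
  have e4 := neg_abs_le ((((CR + CRᴴ) * M.toBlocks₂₂).trace).re)
  linarith

lemma entry_le_one {n : Type*} [Fintype n] [DecidableEq n] {M : Matrix n n ℂ}
    (hM : M.PosSemidef) (htr : M.trace = 1) (x y : n) : norm (M x y) ≤ 1 := by
  have hdiag : ∀ z, 0 ≤ (M z z).re := fun z => by
    have := Complex.le_def.mp (diag_nonneg' hM z); simpa using this.1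
  have htrre : (∑ z, (M z z).re) = 1 := by
    have : (M.trace).re = 1 := by rw [htr]; simp
    rw [Matrix.trace, Complex.re_sum] at this
    simpa [Matrix.diag] using this
  have hdiag1 : ∀ z, (M z z).re ≤ 1 := fun z => by
    rw [← htrre]
    exact Finset.single_le_sum (fun y _ => hdiag y) (Finset.mem_univ z)
  have h := abs_sq_entry_le hM x y
  nlinarith [norm_nonneg (M x y), hdiag x, hdiag y, hdiag1 x, hdiag1 y]

set_option maxHeartbeats 1000000 in
/-- If `C` has vanishing lower-left block and `C_S + C_S*` is positive definite,
then along any sequence of density matrices converging to `I(ℍ_S)`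
(i.e. `Tr(Π₀ρ_n) → 1`), `liminf |Tr((C+C*)ρ_n)| ≥ λ_min(C_S+C_S*) > 0`. -/
theorem liminf_trace_ge_lambda_min
    {s r : ℕ} [NeZero s]
    (CS : Matrix (Fin s) (Fin s) ℂ) (CP : Matrix (Fin s) (Fin r) ℂ)
    (CR : Matrix (Fin r) (Fin r) ℂ)
    (hCSpd : (CS + CSᴴ).PosDef)
    (C : Matrix (Fin s ⊕ Fin r) (Fin s ⊕ Fin r) ℂ)
    (hC : C = Matrix.fromBlocks CS CP 0 CR)
    (P₀ : Matrix (Fin s ⊕ Fin r) (Fin s ⊕ Fin r) ℂ)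
    (hP₀ : P₀ = Matrix.fromBlocks 1 0 0 0)
    (ρ : ℕ → Matrix (Fin s ⊕ Fin r) (Fin s ⊕ Fin r) ℂ)
    (hρ : ∀ n, (ρ n).PosSemidef) (htrρ : ∀ n, Matrix.trace (ρ n) = 1)
    (hconv : Filter.Tendsto (fun n => (Matrix.trace (P₀ * ρ n)).re)
      Filter.atTop (nhds 1)) :
    (⨅ i, hCSpd.1.eigenvalues i) ≤
        Filter.liminf (fun n => |(Matrix.trace ((C + Cᴴ) * ρ n)).re|) Filter.atTop ∧
      0 < ⨅ i, hCSpd.1.eigenvalues i := by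
  haveI : Nonempty (Fin s) := ⟨⟨0, Nat.pos_of_ne_zero (NeZero.ne s)⟩⟩
  have hlampos : 0 < ⨅ i, hCSpd.1.eigenvalues i := by
    obtain ⟨i, hi⟩ := exists_eq_ciInf_of_finite (f := fun i => hCSpd.1.eigenvalues i)
    rw [← hi]
    exact hCSpd.eigenvalues_pos i
  refine ⟨?_, hlampos⟩
  set lam : ℝ := ⨅ i, hCSpd.1.eigenvalues i with hlam
  set SP : ℝ := ∑ i, ∑ j, norm (CP i j) with hSP
  set SR : ℝ := ∑ i, ∑ j, norm ((CR + CRᴴ) i j) with hSR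
  set τ : ℕ → ℝ := fun n => (((ρ n).toBlocks₂₂).trace).re with hτ
  -- the matrix identity C + Cᴴ = fromBlocks ...
  have hCform : C + Cᴴ = Matrix.fromBlocks (CS + CSᴴ) CP CPᴴ (CR + CRᴴ) := by
    rw [hC, Matrix.fromBlocks_conjTranspose, Matrix.fromBlocks_add]
    congr 1 <;> simp
  -- trace of P₀ * ρ n
  have hP0tr : ∀ n, (Matrix.trace (P₀ * ρ n)).re = 1 - τ n := by
    intro n
    have h1 : Matrix.trace (P₀ * ρ n) = ((ρ n).toBlocks₁₁).trace := by
      rw [hP₀]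
      conv_lhs => rw [← Matrix.fromBlocks_toBlocks (ρ n)]
      rw [Matrix.fromBlocks_multiply, trace_fromBlocks']
      simp
    have h2 : (ρ n).trace = ((ρ n).toBlocks₁₁).trace + ((ρ n).toBlocks₂₂).trace := by
      conv_lhs => rw [← Matrix.fromBlocks_toBlocks (ρ n)]
      rw [trace_fromBlocks']
    have h3 : ((ρ n).trace).re = (((ρ n).toBlocks₁₁).trace).re + τ n := by
      rw [h2]; simp [hτ]
    rw [htrρ n] at h3
    simp only [Complex.one_re] at h3
    rw [h1]
    linarith
  -- τ tends to 0
  have hτ0 : Filter.Tendsto τ Filter.atTop (nhds 0) := by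
    have h := Filter.Tendsto.const_sub 1 hconv
    simp only [sub_self] at h
    have : (fun n => 1 - (Matrix.trace (P₀ * ρ n)).re) = τ := by
      funext n; rw [hP0tr n]; ring
    rwa [this] at h
  -- the lower bound function g
  set g : ℕ → ℝ := fun n => lam * (1 - τ n) - 2 * SP * Real.sqrt (τ n) - SR * τ n with hg
  have hgtend : Filter.Tendsto g Filter.atTop (nhds lam) := by
    have h1 : Filter.Tendsto (fun n => 1 - τ n) Filter.atTop (nhds 1) := by
      have := Filter.Tendsto.const_sub 1 hτ0
      simpa using this
    have h2 : Filter.Tendsto (fun n => Real.sqrt (τ n)) Filter.atTop (nhds 0) := by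
      have := hτ0.sqrt
      simpa using this
    have h3 := ((h1.const_mul lam).sub (h2.const_mul (2 * SP))).sub (hτ0.const_mul SR)
    simpa using h3
  -- pointwise bound
  have hle : ∀ n, g n ≤ |(Matrix.trace ((C + Cᴴ) * ρ n)).re| := by
    intro n
    have h := aux_bound CS CP CR hCSpd (ρ n) (hρ n) (htrρ n)
    rw [← hCform] at h
    exact le_trans h (le_abs_self _)
  -- upper bound for coboundedness
  have hub : ∀ n, |(Matrix.trace ((C + Cᴴ) * ρ n)).re|
      ≤ (∑ i, ∑ j, norm ((C + Cᴴ) i j)) * 1 := fun n =>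
    trace_abs_bound (C + Cᴴ) (ρ n) 1 (fun i j => entry_le_one (hρ n) (htrρ n) j i)
  -- conclude via liminf
  have hfin := Filter.liminf_le_liminf (Filter.Eventually.of_forall hle)
    hgtend.isBoundedUnder_ge
    (Filter.IsBoundedUnder.isCoboundedUnder_ge (Filter.isBoundedUnder_of ⟨_, hub⟩))
  rwa [hgtend.liminf_eq] at hfin
end
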